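/- Let Λ_1, Λ_2 be disjoint open bounded subsets of ℝ^d. Then for any integers N_1, N_2 ≥ 0, the canonical partition functions satisfy Y(Λ_1 ∪ Λ_2, N_1 + N_2) ≥ Y(Λ_1, N_1) · Y(Λ_2, N_2); equivalently, the free energy F(Λ,N) = −log Y(Λ,N) is subadditive: F(Λ_1 ∪ Λ_2, N_1+N_2) ≤ F(Λ_1,N_1) + F(Λ_2,N_2). -/

import Mathlib

open Finset Filter MeasureTheory
open scoped ENNReal

/-- Length of the cycle of `π` containing `i` (1 for fixed points). -/
noncomputable def cycleLen {n : ℕ} (π : Equiv.Perm (Fin n)) (i : Fin n) : ℕ :=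
  Function.minimalPeriod π i

/-- `numCycles π ℓ` = number of cycles of `π` of length `ℓ` (counting fixed points as 1-cycles). -/
noncomputable def numCycles {n : ℕ} (π : Equiv.Perm (Fin n)) (ℓ : ℕ) : ℕ :=
  (Finset.univ.filter fun i => cycleLen π i = ℓ).card / ℓ

/-- The total cycle weight `∑_ℓ α_ℓ r_ℓ(π)`. -/
noncomputable def cycleWeight (α : ℕ → ℝ) {n : ℕ} (π : Equiv.Perm (Fin n)) : ℝ :=
  ∑ ℓ ∈ Finset.Icc 1 n, α ℓ * (numCycles π ℓ : ℝ)

/-- Canonical partition function `Y(Λ,N) = (1/N!) ∫_{Λ^N} ∑_{π∈S_N} e^{-H(x,π)} dx`,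
where `φ = e^{-ξ}` is the Boltzmann weight of a jump and
`e^{-H(x,π)} = (∏_i φ(x_i - x_{π(i)})) e^{-∑_ℓ α_ℓ r_ℓ(π)}`; valued in `[0,∞]`. -/
noncomputable def YE (d : ℕ) (φ : (Fin d → ℝ) → ℝ) (α : ℕ → ℝ)
    (Λ : Set (Fin d → ℝ)) (N : ℕ) : ℝ≥0∞ :=
  (N.factorial : ℝ≥0∞)⁻¹ * ∑ π : Equiv.Perm (Fin N),
    (∫⁻ x : Fin N → Fin d → ℝ in Set.univ.pi (fun _ : Fin N => Λ),
        ∏ i, ENNReal.ofReal (φ (x i - x (π i))) ∂volume) *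
      ENNReal.ofReal (Real.exp (-(cycleWeight α π)))

/-- Grand-canonical partition function `Z(Λ,μ) = ∑_{N≥0} e^{μN} Y(Λ,N)`. -/
noncomputable def ZE (d : ℕ) (φ : (Fin d → ℝ) → ℝ) (α : ℕ → ℝ)
    (Λ : Set (Fin d → ℝ)) (μ : ℝ) : ℝ≥0∞ :=
  ∑' N : ℕ, ENNReal.ofReal (Real.exp (μ * N)) * YE d φ α Λ N

/-- Finite-volume pressure `p_Λ(μ) = (1/|Λ|) log Z(Λ,μ)`, valued in `[-∞,∞]`. -/
noncomputable def pressureE (d : ℕ) (φ : (Fin d → ℝ) → ℝ) (α : ℕ → ℝ)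
    (Λ : Set (Fin d → ℝ)) (μ : ℝ) : EReal :=
  (((volume Λ).toReal⁻¹ : ℝ) : EReal) * ENNReal.log (ZE d φ α Λ μ)

/-- Infinite-volume pressure `p(μ) = ∑_{n≥1} (e^{μn-α_n}/n) ∫_{ℝ^d} e^{-nε(k)} dk ∈ [0,∞]`. -/
noncomputable def pLimit (d : ℕ) (α : ℕ → ℝ) (ε : (Fin d → ℝ) → ℝ) (μ : ℝ) : ℝ≥0∞ :=
  ∑' n : ℕ, (ENNReal.ofReal (Real.exp (μ * (n + 1) - α (n + 1))) / ((n : ℝ≥0∞) + 1)) *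
    ∫⁻ k : Fin d → ℝ, ENNReal.ofReal (Real.exp (-((n : ℝ) + 1) * ε k)) ∂volume

/-- `Λ_n → ℝ^d` in the sense of Fisher: `|Λ_n| → ∞` and
`sup_n |∂_{ε diam Λ_n} Λ_n| / |Λ_n| → 0` as `ε → 0`, where `∂_r Λ = {x : dist(x,∂Λ) ≤ r}`. -/
def IsFisher (d : ℕ) (Λseq : ℕ → Set (Fin d → ℝ)) : Prop :=
  Tendsto (fun n => (volume (Λseq n)).toReal) atTop atTop ∧
  ∀ δ : ℝ, 0 < δ → ∃ ε : ℝ, 0 < ε ∧ ∀ n,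
    (volume {x : Fin d → ℝ |
        Metric.infDist x (frontier (Λseq n)) ≤ ε * Metric.diam (Λseq n)}).toReal
      ≤ δ * (volume (Λseq n)).toReal

/-- `Y(Λ, t)` for real `t ≥ 0`, extended by linear interpolation between consecutive integers. -/
noncomputable def Yinterp (d : ℕ) (φ : (Fin d → ℝ) → ℝ) (α : ℕ → ℝ)
    (Λ : Set (Fin d → ℝ)) (t : ℝ) : ℝ :=
  (1 - (t - (⌊t⌋₊ : ℝ))) * (YE d φ α Λ ⌊t⌋₊).toReal
    + (t - (⌊t⌋₊ : ℝ)) * (YE d φ α Λ (⌊t⌋₊ + 1)).toReal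

/-- Finite-volume free energy `q_Λ(ρ) = -(1/|Λ|) log Y(Λ, |Λ|ρ)`. -/
noncomputable def freeEnergy (d : ℕ) (φ : (Fin d → ℝ) → ℝ) (α : ℕ → ℝ)
    (Λ : Set (Fin d → ℝ)) (ρ : ℝ) : ℝ :=
  -((volume Λ).toReal)⁻¹ * Real.log (Yinterp d φ α Λ ((volume Λ).toReal * ρ))

/-!
Label the `N₁ + N₂` particles of a configuration in `(Λ₁ ∪ Λ₂)^(N₁+N₂)` by the set `S` of those
lying in `Λ₁`; as `Λ₁, Λ₂` are disjoint, the regions `{x | xᵢ ∈ Λ₁ ↔ i ∈ S}` are disjoint. When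
`#S = N₁`, a permutation `π₁` of `S` and a permutation `π₂` of its complement glue to a
permutation of all particles whose jump weight factorises over the two groups and whose cycles
are those of `π₁` and of `π₂`. So the region of each such `S` contributes at least
`N₁! N₂! Y(Λ₁,N₁) Y(Λ₂,N₂)` to `(N₁+N₂)! Y(Λ₁ ∪ Λ₂, N₁+N₂)`, and there are `(N₁+N₂).choose N₁`
of them.
-/

theorem Cycle.mem_toFinset {α : Type*} [DecidableEq α] {s : Cycle α} {a : α} :
    a ∈ s.toFinset ↔ a ∈ s := by
  induction s using Quotient.inductionOn' with
  | h l => exact List.mem_toFinset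

namespace Function

theorem Semiconj.minimalPeriod_apply_eq {α β : Type*} {fa : α → α} {fb : β → β} {g : α → β}
    (hg : Injective g) (h : Semiconj g fa fb) (x : α) :
    minimalPeriod fb (g x) = minimalPeriod fa x :=
  minimalPeriod_eq_minimalPeriod_iff.2 fun n =>
    ⟨fun hx => hg <| ((h.iterate_right n) x).trans hx, fun hx => hx.map h⟩

theorem card_toFinset_periodicOrbit {α : Type*} [DecidableEq α] (f : α → α) (x : α) :
    (periodicOrbit f x).toFinset.card = minimalPeriod f x := by
  have hnd : ((List.range (minimalPeriod f x)).map (f^[·] x)).Nodup := by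
    simpa [periodicOrbit_def] using nodup_periodicOrbit (f := f) (x := x)
  rw [periodicOrbit_def, Cycle.coe_toFinset, List.toFinset_card_of_nodup hnd, List.length_map,
    List.length_range]

end Function

open Function

namespace Equiv.Perm

-- The points of minimal period `ℓ` are a union of orbits, each of size `ℓ`.
theorem dvd_card_filter_minimalPeriod_eq {β : Type*} [Fintype β] [DecidableEq β]
    (σ : Perm β) (ℓ : ℕ) : ℓ ∣ #{i | minimalPeriod σ i = ℓ} := by
  set A : Finset β := {i | minimalPeriod σ i = ℓ}
  have hper : ∀ i, i ∈ periodicPts σ := σ.injective.mem_periodicPts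
  have hfiber : ∀ i ∈ A, {j ∈ A | (periodicOrbit σ j).toFinset = (periodicOrbit σ i).toFinset}
      = (periodicOrbit σ i).toFinset := by
    intro i hi
    ext j
    rw [Finset.mem_filter, Cycle.mem_toFinset]
    constructor
    · rintro ⟨-, hj⟩
      rw [← Cycle.mem_toFinset, ← hj, Cycle.mem_toFinset]
      exact self_mem_periodicOrbit (hper j)
    · intro hj
      obtain ⟨n, rfl⟩ := (mem_periodicOrbit_iff (hper i)).1 hj
      refine ⟨?_, by rw [periodicOrbit_apply_iterate_eq (hper i)]⟩
      simpa [A, minimalPeriod_apply_iterate (hper i)] using hi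
  rw [Finset.card_eq_sum_card_image (fun i => (periodicOrbit σ i).toFinset) A]
  refine Finset.dvd_sum fun O hO => ?_
  obtain ⟨i, hi, rfl⟩ := Finset.mem_image.1 hO
  rw [hfiber i hi, card_toFinset_periodicOrbit, (Finset.mem_filter.1 hi).2]

theorem card_filter_minimalPeriod_permCongr {α β : Type*} [Fintype α] [Fintype β]
    (e : α ≃ β) (σ : Perm α) (ℓ : ℕ) :
    #{j | minimalPeriod (e.permCongr σ) j = ℓ} = #{i | minimalPeriod σ i = ℓ} := by
  refine (Finset.card_equiv e fun i => ?_).symm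
  have h : Semiconj e σ (e.permCongr σ) := fun a => by simp [permCongr_apply]
  simp [h.minimalPeriod_apply_eq e.injective]

theorem card_filter_minimalPeriod_sumCongr {α β : Type*} [Fintype α] [Fintype β]
    (σ : Perm α) (τ : Perm β) (ℓ : ℕ) :
    #{x | minimalPeriod (sumCongr σ τ) x = ℓ}
      = #{a | minimalPeriod σ a = ℓ} + #{b | minimalPeriod τ b = ℓ} := by
  have hl : Semiconj Sum.inl σ (sumCongr σ τ) := fun a => by simp
  have hr : Semiconj Sum.inr τ (sumCongr σ τ) := fun b => by simp
  simp only [Finset.card_filter, Fintype.sum_sum_type, hl.minimalPeriod_apply_eq Sum.inl_injective,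
    hr.minimalPeriod_apply_eq Sum.inr_injective]

end Equiv.Perm

theorem numCycles_permCongr_sumCongr {N₁ N₂ : ℕ} (e : Fin N₁ ⊕ Fin N₂ ≃ Fin (N₁ + N₂))
    (π₁ : Equiv.Perm (Fin N₁)) (π₂ : Equiv.Perm (Fin N₂)) (ℓ : ℕ) :
    numCycles (e.permCongr (π₁.sumCongr π₂)) ℓ = numCycles π₁ ℓ + numCycles π₂ ℓ := by
  unfold numCycles cycleLen
  rw [Equiv.Perm.card_filter_minimalPeriod_permCongr,
    Equiv.Perm.card_filter_minimalPeriod_sumCongr,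
    Nat.add_div_of_dvd_right (π₁.dvd_card_filter_minimalPeriod_eq ℓ)]

theorem numCycles_eq_zero_of_lt {n : ℕ} (π : Equiv.Perm (Fin n)) {ℓ : ℕ} (hℓ : n < ℓ) :
    numCycles π ℓ = 0 :=
  Nat.div_eq_of_lt <| (Finset.card_filter_le _ _).trans_lt <| by simpa using hℓ

theorem cycleWeight_eq_sum_Icc (α : ℕ → ℝ) {n m : ℕ} (π : Equiv.Perm (Fin n)) (h : n ≤ m) :
    cycleWeight α π = ∑ ℓ ∈ Finset.Icc 1 m, α ℓ * (numCycles π ℓ : ℝ) := by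
  refine Finset.sum_subset (Finset.Icc_subset_Icc_right h) fun ℓ hℓm hℓn => ?_
  rw [Finset.mem_Icc] at hℓm hℓn
  rw [numCycles_eq_zero_of_lt π (by omega), Nat.cast_zero, mul_zero]

theorem cycleWeight_permCongr_sumCongr (α : ℕ → ℝ) {N₁ N₂ : ℕ}
    (e : Fin N₁ ⊕ Fin N₂ ≃ Fin (N₁ + N₂)) (π₁ : Equiv.Perm (Fin N₁)) (π₂ : Equiv.Perm (Fin N₂)) :
    cycleWeight α (e.permCongr (π₁.sumCongr π₂)) = cycleWeight α π₁ + cycleWeight α π₂ := by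
  rw [cycleWeight_eq_sum_Icc α π₁ (Nat.le_add_right N₁ N₂),
    cycleWeight_eq_sum_Icc α π₂ (Nat.le_add_left N₂ N₁), ← Finset.sum_add_distrib, cycleWeight]
  simp only [numCycles_permCongr_sumCongr, Nat.cast_add, mul_add]

section Integrals

variable {E : Type*} [Sub E] (φ : E → ℝ)

noncomputable def cycleIntegrand {ι : Type*} [Fintype ι] (σ : Equiv.Perm ι) (x : ι → E) : ℝ≥0∞ :=
  ∏ i, ENNReal.ofReal (φ (x i - x (σ i)))

theorem cycleIntegrand_permCongr {α β : Type*} [Fintype α] [Fintype β] (e : α ≃ β)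
    (σ : Equiv.Perm α) (x : β → E) :
    cycleIntegrand φ (e.permCongr σ) x = cycleIntegrand φ σ (x ∘ e) := by
  rw [cycleIntegrand, ← e.prod_comp]
  simp [cycleIntegrand, Equiv.permCongr_apply]

theorem cycleIntegrand_sumCongr {α β : Type*} [Fintype α] [Fintype β]
    (σ : Equiv.Perm α) (τ : Equiv.Perm β) (x : α ⊕ β → E) :
    cycleIntegrand φ (σ.sumCongr τ) x
      = cycleIntegrand φ σ (x ∘ Sum.inl) * cycleIntegrand φ τ (x ∘ Sum.inr) :=
  Fintype.prod_sum_type _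

theorem measurable_cycleIntegrand [MeasurableSpace E] [MeasurableSub₂ E] (hφ : Measurable φ)
    {ι : Type*} [Fintype ι] (σ : Equiv.Perm ι) : Measurable (cycleIntegrand φ σ) :=
  Finset.measurable_prod _ fun i _ => ENNReal.measurable_ofReal.comp <|
    hφ.comp <| (measurable_pi_apply i).sub (measurable_pi_apply (σ i))

variable [MeasureSpace E] [SigmaFinite (volume : Measure E)]

theorem setLIntegral_cycleIntegrand_permCongr {α β : Type*} [Fintype α] [Fintype β]
    (e : α ≃ β) (σ : Equiv.Perm α) (Λ : β → Set E) :
    ∫⁻ x in Set.univ.pi Λ, cycleIntegrand φ (e.permCongr σ) x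
      = ∫⁻ y in Set.univ.pi (Λ ∘ e), cycleIntegrand φ σ y := by
  have hg := volume_measurePreserving_piCongrLeft (fun _ : β => E) e
  have happ : ∀ (y : α → E) (a : α), MeasurableEquiv.piCongrLeft (fun _ => E) e y (e a) = y a :=
    Equiv.piCongrLeft_apply_apply (P := fun _ => E) e
  rw [← hg.setLIntegral_comp_preimage_emb (MeasurableEquiv.measurableEmbedding _)]
  congr 1
  · congr 1
    ext y
    simp only [Set.mem_preimage, Set.mem_univ_pi, Function.comp_apply, ← happ y]
    exact e.forall_congr_right.symm
  · funext y
    rw [cycleIntegrand_permCongr]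
    exact congrArg _ (funext (happ y))

theorem setLIntegral_cycleIntegrand_sumCongr [MeasurableSub₂ E] (hφ : Measurable φ)
    {α β : Type*} [Fintype α] [Fintype β] (σ : Equiv.Perm α) (τ : Equiv.Perm β)
    (Λ₁ : α → Set E) (Λ₂ : β → Set E) :
    ∫⁻ x in Set.univ.pi (Sum.elim Λ₁ Λ₂), cycleIntegrand φ (σ.sumCongr τ) x
      = (∫⁻ y in Set.univ.pi Λ₁, cycleIntegrand φ σ y)
        * ∫⁻ z in Set.univ.pi Λ₂, cycleIntegrand φ τ z := by
  have hg := volume_measurePreserving_sumPiEquivProdPi_symm (fun _ : α ⊕ β => E)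
  rw [← hg.setLIntegral_comp_preimage_emb (MeasurableEquiv.measurableEmbedding _),
    MeasurableEquiv.coe_sumPiEquivProdPi_symm, Equiv.sumPiEquivProdPi_symm_preimage_univ_pi,
    Measure.volume_eq_prod, ← Measure.prod_restrict]
  simp only [cycleIntegrand_sumCongr]
  exact lintegral_prod_mul (measurable_cycleIntegrand φ hφ σ).aemeasurable
    (measurable_cycleIntegrand φ hφ τ).aemeasurable

end Integrals

section Regions

variable {ι E : Type*} [DecidableEq ι] {Λ₁ Λ₂ : Set E}

theorem mem_iff_of_mem_pi_piecewise (hd : Disjoint Λ₁ Λ₂) {S : Finset ι} {x : ι → E}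
    (hx : x ∈ Set.univ.pi (S.piecewise (fun _ => Λ₁) (fun _ => Λ₂))) (i : ι) :
    i ∈ S ↔ x i ∈ Λ₁ := by
  have hxi := hx i (Set.mem_univ i)
  by_cases hi : i ∈ S
  · simp_all
  · simp only [hi, not_false_eq_true, Finset.piecewise_eq_of_notMem] at hxi
    simp [hi, hd.notMem_of_mem_right hxi]

theorem sum_setLIntegral_pi_piecewise_le [Fintype ι] [MeasurableSpace E]
    (h₁ : MeasurableSet Λ₁) (h₂ : MeasurableSet Λ₂) (hd : Disjoint Λ₁ Λ₂)
    (μ : Measure (ι → E)) (f : (ι → E) → ℝ≥0∞) (T : Finset (Finset ι)) :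
    ∑ S ∈ T, ∫⁻ x in Set.univ.pi (S.piecewise (fun _ => Λ₁) (fun _ => Λ₂)), f x ∂μ
      ≤ ∫⁻ x in Set.univ.pi (fun _ => Λ₁ ∪ Λ₂), f x ∂μ := by
  have hdisj : (T : Set (Finset ι)).PairwiseDisjoint
      fun S => Set.univ.pi (S.piecewise (fun _ => Λ₁) (fun _ => Λ₂)) :=
    fun S _ S' _ hne => Set.disjoint_left.2 fun x hx hx' => hne <| Finset.ext fun i =>
      (mem_iff_of_mem_pi_piecewise hd hx i).trans (mem_iff_of_mem_pi_piecewise hd hx' i).symm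
  have hmeas : ∀ S ∈ T, MeasurableSet (Set.univ.pi (S.piecewise (fun _ => Λ₁) (fun _ => Λ₂))) :=
    fun S _ => MeasurableSet.univ_pi fun i => by
      by_cases hi : i ∈ S <;> simp [hi, h₁, h₂]
  rw [← lintegral_biUnion_finset hdisj hmeas]
  refine lintegral_mono_set (Set.iUnion₂_subset fun S _ x hx i _ => ?_)
  by_cases hi : i ∈ S
  · exact Or.inl (by simpa [hi] using hx i (Set.mem_univ i))
  · exact Or.inr (by simpa [hi] using hx i (Set.mem_univ i))

end Regions

theorem piecewise_comp_finSumEquivOfFinset {E : Type*} {N m n : ℕ} {S : Finset (Fin N)}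
    (hm : #S = m) (hn : #Sᶜ = n) (Λ₁ Λ₂ : Set E) :
    S.piecewise (fun _ => Λ₁) (fun _ => Λ₂) ∘ finSumEquivOfFinset hm hn
      = Sum.elim (fun _ => Λ₁) (fun _ => Λ₂) := by
  funext a
  rcases a with a | b
  · simp [finSumEquivOfFinset_inl, S.orderEmbOfFin_mem hm a]
  · have := Sᶜ.orderEmbOfFin_mem hn b
    rw [Finset.mem_compl] at this
    simp [finSumEquivOfFinset_inr, this]

section PartitionSum

variable {E : Type*} [Sub E] [MeasureSpace E] (φ : E → ℝ) (α : ℕ → ℝ)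

noncomputable def partitionSum {n : ℕ} (Λ : Fin n → Set E) : ℝ≥0∞ :=
  ∑ π : Equiv.Perm (Fin n), (∫⁻ x in Set.univ.pi Λ, cycleIntegrand φ π x) *
    ENNReal.ofReal (Real.exp (-(cycleWeight α π)))

/-- Gluing permutations of the two groups of particles is injective, multiplies the
configuration integrals and adds the cycle weights. -/
theorem partitionSum_mul_le [SigmaFinite (volume : Measure E)] [MeasurableSub₂ E]
    (hφ : Measurable φ) {N₁ N₂ : ℕ} (e : Fin N₁ ⊕ Fin N₂ ≃ Fin (N₁ + N₂))
    (Λ₁ : Fin N₁ → Set E) (Λ₂ : Fin N₂ → Set E) (Λ : Fin (N₁ + N₂) → Set E)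
    (hΛ : Λ ∘ e = Sum.elim Λ₁ Λ₂) :
    partitionSum φ α Λ₁ * partitionSum φ α Λ₂ ≤ partitionSum φ α Λ := by
  set term : Equiv.Perm (Fin (N₁ + N₂)) → ℝ≥0∞ := fun π =>
    (∫⁻ x in Set.univ.pi Λ, cycleIntegrand φ π x) * ENNReal.ofReal (Real.exp (-(cycleWeight α π)))
  set glue : Equiv.Perm (Fin N₁) × Equiv.Perm (Fin N₂) ↪ Equiv.Perm (Fin (N₁ + N₂)) :=
    ⟨fun p => e.permCongr (p.1.sumCongr p.2),
      e.permCongr.injective.comp Equiv.Perm.sumCongrHom_injective⟩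
  calc partitionSum φ α Λ₁ * partitionSum φ α Λ₂ = ∑ p, term (glue p) := by
        rw [partitionSum, partitionSum, Finset.sum_mul_sum, ← Finset.univ_product_univ,
          Finset.sum_product]
        refine Finset.sum_congr rfl fun π₁ _ => Finset.sum_congr rfl fun π₂ _ => ?_
        simp only [term, glue, Function.Embedding.coeFn_mk]
        rw [setLIntegral_cycleIntegrand_permCongr, hΛ, setLIntegral_cycleIntegrand_sumCongr φ hφ,
          cycleWeight_permCongr_sumCongr, neg_add, Real.exp_add,
          ENNReal.ofReal_mul (Real.exp_nonneg _)]
        ring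
    _ = ∑ π ∈ Finset.univ.map glue, term π := (Finset.sum_map _ _ _).symm
    _ ≤ partitionSum φ α Λ := Finset.sum_le_sum_of_subset (Finset.subset_univ _)

theorem sum_partitionSum_piecewise_le {n : ℕ} {Λ₁ Λ₂ : Set E} (h₁ : MeasurableSet Λ₁)
    (h₂ : MeasurableSet Λ₂) (hd : Disjoint Λ₁ Λ₂) (T : Finset (Finset (Fin n))) :
    ∑ S ∈ T, partitionSum φ α (S.piecewise (fun _ => Λ₁) (fun _ => Λ₂))
      ≤ partitionSum φ α fun _ : Fin n => Λ₁ ∪ Λ₂ := by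
  simp only [partitionSum]
  rw [Finset.sum_comm]
  gcongr with π
  rw [← Finset.sum_mul]
  gcongr
  exact sum_setLIntegral_pi_piecewise_le h₁ h₂ hd _ _ T

end PartitionSum

theorem YE_eq_partitionSum (d : ℕ) (φ : (Fin d → ℝ) → ℝ) (α : ℕ → ℝ) (Λ : Set (Fin d → ℝ))
    (N : ℕ) :
    YE d φ α Λ N = (N.factorial : ℝ≥0∞)⁻¹ * partitionSum φ α fun _ : Fin N => Λ :=
  rfl

theorem inv_factorial_mul_inv_factorial (N₁ N₂ : ℕ) :
    (N₁.factorial : ℝ≥0∞)⁻¹ * (N₂.factorial : ℝ≥0∞)⁻¹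
      = ((N₁ + N₂).factorial : ℝ≥0∞)⁻¹ * ((N₁ + N₂).choose N₁ : ℝ≥0∞) := by
  have hc : ((N₁ + N₂).choose N₁ : ℝ≥0∞) ≠ 0 := by
    simpa using (Nat.choose_pos (Nat.le_add_right N₁ N₂)).ne'
  have h : ((N₁ + N₂).factorial : ℝ≥0∞)
      = (N₁ + N₂).choose N₁ * (N₁.factorial * N₂.factorial) := by
    rw [← Nat.choose_mul_factorial_mul_factorial (Nat.le_add_right N₁ N₂), Nat.add_sub_cancel_left]
    push_cast
    ring
  rw [h, ENNReal.mul_inv (.inl hc) (.inl (ENNReal.natCast_ne_top _)), mul_right_comm,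
    ENNReal.inv_mul_cancel hc (by simp), one_mul, ENNReal.mul_inv (by simp) (by simp)]

theorem stmt11_general (d : ℕ) (φ : (Fin d → ℝ) → ℝ) (α : ℕ → ℝ)
    (hφmeas : Measurable φ)
    (Λ₁ Λ₂ : Set (Fin d → ℝ))
    (h₁o : IsOpen Λ₁) (h₂o : IsOpen Λ₂)
    (hdisj : Disjoint Λ₁ Λ₂) (N₁ N₂ : ℕ) :
    YE d φ α Λ₁ N₁ * YE d φ α Λ₂ N₂ ≤ YE d φ α (Λ₁ ∪ Λ₂) (N₁ + N₂) := by
  set P := Finset.powersetCard N₁ (Finset.univ : Finset (Fin (N₁ + N₂)))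
  have hsplit : ∀ S ∈ P, partitionSum φ α (fun _ : Fin N₁ => Λ₁) *
      partitionSum φ α (fun _ : Fin N₂ => Λ₂)
        ≤ partitionSum φ α (S.piecewise (fun _ => Λ₁) (fun _ => Λ₂)) := by
    intro S hS
    have hS₁ : #S = N₁ := Finset.mem_powersetCard_univ.1 hS
    have hS₂ : #Sᶜ = N₂ := by rw [Finset.card_compl, hS₁, Fintype.card_fin]; omega
    exact partitionSum_mul_le φ α hφmeas _ _ _ _
      (piecewise_comp_finSumEquivOfFinset hS₁ hS₂ Λ₁ Λ₂)
  calc YE d φ α Λ₁ N₁ * YE d φ α Λ₂ N₂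
      = ((N₁ + N₂).factorial : ℝ≥0∞)⁻¹ * ∑ _S ∈ P,
          partitionSum φ α (fun _ : Fin N₁ => Λ₁) * partitionSum φ α (fun _ : Fin N₂ => Λ₂) := by
        rw [YE_eq_partitionSum, YE_eq_partitionSum, mul_mul_mul_comm,
          inv_factorial_mul_inv_factorial, Finset.sum_const, Finset.card_powersetCard,
          Finset.card_univ, Fintype.card_fin, nsmul_eq_mul, mul_assoc]
    _ ≤ ((N₁ + N₂).factorial : ℝ≥0∞)⁻¹ *
          ∑ S ∈ P, partitionSum φ α (S.piecewise (fun _ => Λ₁) (fun _ => Λ₂)) := by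
        gcongr with S hS
        exact hsplit S hS
    _ ≤ YE d φ α (Λ₁ ∪ Λ₂) (N₁ + N₂) := by
        rw [YE_eq_partitionSum]
        gcongr
        exact sum_partitionSum_piecewise_le φ α h₁o.measurableSet h₂o.measurableSet hdisj P

/-- Subadditivity of the free energy: for disjoint open bounded `Λ₁, Λ₂` and any `N₁, N₂`,
`Y(Λ₁ ∪ Λ₂, N₁+N₂) ≥ Y(Λ₁,N₁) Y(Λ₂,N₂)`, i.e. `F = -log Y` is subadditive. -/
theorem stmt11 (d : ℕ) (φ : (Fin d → ℝ) → ℝ) (α : ℕ → ℝ)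
    (hφmeas : Measurable φ) (hφnn : ∀ x, 0 ≤ φ x)
    (hφ1 : ∫⁻ x : Fin d → ℝ, ENNReal.ofReal (φ x) ∂volume = 1)
    (Λ₁ Λ₂ : Set (Fin d → ℝ))
    (h₁o : IsOpen Λ₁) (h₂o : IsOpen Λ₂)
    (h₁b : Bornology.IsBounded Λ₁) (h₂b : Bornology.IsBounded Λ₂)
    (hdisj : Disjoint Λ₁ Λ₂) (N₁ N₂ : ℕ) :
    YE d φ α Λ₁ N₁ * YE d φ α Λ₂ N₂ ≤ YE d φ α (Λ₁ ∪ Λ₂) (N₁ + N₂) :=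
  stmt11_general d φ α hφmeas Λ₁ Λ₂ h₁o h₂o hdisj N₁ N₂
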